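/- arXiv:1510.03002 — 6 statements merged into one kernel-verified Lean document; each statement's English description precedes it below -/
import Mathlib

section
/- Let e and q be coprime integers with 2 ≤ e < q, and let (a,b) be a pair of integers with a·e − b·q = 1 for which |a| is minimal. Set σ = sign(a), c = −2a + σ·q, and d = −2b + σ·e. Then the four integers a, b, c, d are simultaneously nonnegative or simultaneously nonpositive; more precisely, if a > 0 then a > 0, b > 0, c > 0 and d ≥ 0, and if a < 0 then a < 0, b < 0, c < 0 and d ≤ 0. Moreover, if e is odd then d ≠ 0. -/
/-!
Replacing `(a, b)` by `(a ∓ q, b ∓ e)` gives another Bezout pair, so minimality of `|a|` forces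
`2|a| ≤ q`, and equality would make `a` a divisor of `a * e - b * q = 1`, i.e. `q = 2`. Hence
`c = σ(q - 2|a|)` has the sign `σ` of `a`. The pair `(c, d)` satisfies `c * e - d * q = -2`, and
`(a, b)` satisfies `a * e - b * q = 1`; since `e ≥ 2`, these identities transfer the signs of
`a` and `c` to `b` and `d`. Finally `d ≡ σ * e ≡ e [ZMOD 2]`, so `d` is odd when `e` is.
-/

lemma two_mul_abs_lt_of_minimal_bezout {e q a b : ℤ} (hq : 2 < q) (hab : a * e - b * q = 1)
    (hmin : ∀ a' b' : ℤ, a' * e - b' * q = 1 → |a| ≤ |a'|) :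
    2 * |a| < q := by
  have hle : 2 * |a| ≤ q := by
    have h_sub := hmin (a - q) (b - e) (by linear_combination hab)
    have h_add := hmin (a + q) (b + e) (by linear_combination hab)
    cases abs_cases a <;> cases abs_cases (a - q) <;> cases abs_cases (a + q) <;> linarith
  refine hle.lt_of_ne fun h => ?_
  have ha_dvd_one : a ∣ 1 := by
    have ha_dvd_q : a ∣ q := h ▸ (self_dvd_abs a).mul_left 2
    exact hab ▸ dvd_sub (dvd_mul_right a e) (ha_dvd_q.mul_left b)
  have ha_abs : |a| = 1 := Int.isUnit_iff_abs_eq.mp (isUnit_of_dvd_one ha_dvd_one)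
  omega

lemma ne_zero_of_bezout {e q a b : ℤ} (hq : 1 < q) (hab : a * e - b * q = 1) : a ≠ 0 := by
  rintro rfl
  have hq_dvd_one : q ∣ 1 := ⟨-b, by linarith⟩
  have := Int.le_of_dvd one_pos hq_dvd_one
  omega

theorem stmt2_general (e q a b σ c d : ℤ) (he : 2 ≤ e) (hq : e < q)
    (hab : a * e - b * q = 1)
    (hmin : ∀ a' b' : ℤ, a' * e - b' * q = 1 → |a| ≤ |a'|)
    (hσ : σ = Int.sign a) (hc : c = -2 * a + σ * q) (hd : d = -2 * b + σ * e) :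
    (0 < a → 0 < a ∧ 0 < b ∧ 0 < c ∧ 0 ≤ d) ∧
    (a < 0 → a < 0 ∧ b < 0 ∧ c < 0 ∧ d ≤ 0) ∧
    (Odd e → d ≠ 0) := by
  have hsmall : 2 * |a| < q := two_mul_abs_lt_of_minimal_bezout (by omega) hab hmin
  have hcd : c * e - d * q = -2 := by rw [hc, hd]; linear_combination -2 * hab
  refine ⟨fun ha => ?_, fun ha => ?_, fun ⟨k, hk⟩ => ?_⟩
  · rw [hσ, Int.sign_eq_one_of_pos ha] at hc
    rw [abs_of_pos ha] at hsmall
    have hc_pos : 0 < c := by omega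
    exact ⟨ha, by nlinarith, hc_pos, by nlinarith⟩
  · rw [hσ, Int.sign_eq_neg_one_of_neg ha] at hc
    rw [abs_of_neg ha] at hsmall
    have hc_neg : c < 0 := by omega
    exact ⟨ha, by nlinarith, hc_neg, by nlinarith⟩
  · rcases (ne_zero_of_bezout (by omega) hab).lt_or_gt with ha | ha
    · rw [hσ, Int.sign_eq_neg_one_of_neg ha] at hd
      omega
    · rw [hσ, Int.sign_eq_one_of_pos ha] at hd
      omega

/-- For a minimal Bezout pair `(a, b)` for `(e, q)` and `σ = sign a`, `c = -2a + σq`,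
`d = -2b + σe`, the integers `a, b, c, d` are simultaneously nonnegative or
simultaneously nonpositive; moreover `d ≠ 0` when `e` is odd. -/
theorem stmt2 (e q a b σ c d : ℤ) (he : 2 ≤ e) (hq : e < q) (hcop : IsCoprime e q)
    (hab : a * e - b * q = 1)
    (hmin : ∀ a' b' : ℤ, a' * e - b' * q = 1 → |a| ≤ |a'|)
    (hσ : σ = Int.sign a) (hc : c = -2 * a + σ * q) (hd : d = -2 * b + σ * e) :
    (0 < a → 0 < a ∧ 0 < b ∧ 0 < c ∧ 0 ≤ d) ∧
    (a < 0 → a < 0 ∧ b < 0 ∧ c < 0 ∧ d ≤ 0) ∧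
    (Odd e → d ≠ 0) :=
  stmt2_general e q a b σ c d he hq hab hmin hσ hc hd
end

section
/- Let e and q be coprime integers with 2 ≤ e < q. Then the set of Weierstrass gaps for (e,q) is finite and has exactly (e−1)·(q−1)/2 elements. -/
/-- The set of Weierstrass gaps for coprime `(e, q)` with `2 ≤ e < q` is finite
with exactly `(e-1)(q-1)/2` elements. -/
theorem stmt5 (e q : ℕ) (he : 2 ≤ e) (hq : e < q) (hcop : Nat.Coprime e q) :
    {n : ℕ | ¬ ∃ m k : ℕ, n = m * e + k * q}.Finite ∧
    {n : ℕ | ¬ ∃ m k : ℕ, n = m * e + k * q}.ncard = (e - 1) * (q - 1) / 2 := by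
  classical
  set S := {n : ℕ | ¬ ∃ m k : ℕ, n = m * e + k * q} with hS
  have hq0 : 0 < q := by omega
  obtain ⟨P, hP⟩ : ∃ P, e * q = P := ⟨_, rfl⟩
  have heq : e + q + 1 ≤ P := by nlinarith
  set F : ℕ := e * q - e - q with hF
  rw [hP] at hF
  have hFZ : (F : ℤ) = (P : ℤ) - e - q := by omega
  have hPZ : (P : ℤ) = (e : ℤ) * q := by exact_mod_cast hP.symm
  -- helper: integer witnesses give a representation
  have hrep : ∀ (n : ℕ) (A B : ℤ), 0 ≤ A → 0 ≤ B → (n : ℤ) = A * e + B * q →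
      ∃ m k : ℕ, n = m * e + k * q := by
    intro n A B hA hB h
    refine ⟨A.toNat, B.toNat, ?_⟩
    have h2 : (n : ℤ) = (A.toNat : ℤ) * e + (B.toNat : ℤ) * q := by
      rw [Int.toNat_of_nonneg hA, Int.toNat_of_nonneg hB]; exact h
    exact_mod_cast h2
  -- F itself is not representable
  have hFrep : ¬ ∃ m k : ℕ, F = m * e + k * q := by
    rintro ⟨m, k, h⟩
    have hz : (F : ℤ) = (m : ℤ) * e + (k : ℤ) * q := by exact_mod_cast h
    have h' : (e : ℤ) * q = ((m : ℤ) + 1) * e + ((k : ℤ) + 1) * q := by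
      rw [hFZ, hPZ] at hz; linarith
    have hdvd : (q : ℤ) ∣ ((m : ℤ) + 1) * e := by
      refine ⟨(e : ℤ) - ((k : ℤ) + 1), ?_⟩
      linear_combination -h'
    have hcop' : IsCoprime (q : ℤ) (e : ℤ) := by
      rw [Nat.isCoprime_iff_coprime]; exact hcop.symm
    have hdvd2 : (q : ℤ) ∣ ((m : ℤ) + 1) := hcop'.dvd_of_dvd_mul_right hdvd
    have hle : (q : ℤ) ≤ (m : ℤ) + 1 := Int.le_of_dvd (by positivity) hdvd2
    have he2 : (2 : ℤ) ≤ (e : ℤ) := by exact_mod_cast he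
    have hq0' : (0 : ℤ) < (q : ℤ) := by exact_mod_cast hq0
    nlinarith [h', hle]
  -- bezout-type representation with bounded m
  have hbez : ∀ n : ℕ, ∃ (m : ℕ) (k : ℤ), m < q ∧ (n : ℤ) = (m : ℤ) * e + k * q := by
    intro n
    have hcop' : IsCoprime (e : ℤ) (q : ℤ) := by
      rw [Nat.isCoprime_iff_coprime]; exact hcop
    obtain ⟨a, b, hab⟩ := hcop'
    set M : ℤ := ((n : ℤ) * a) % q with hM
    have hM0 : 0 ≤ M := Int.emod_nonneg _ (by exact_mod_cast hq0.ne')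
    have hMq : M < q := Int.emod_lt_of_pos _ (by exact_mod_cast hq0)
    have h1 : ((n : ℤ) * a) % q + q * (((n : ℤ) * a) / q) = (n : ℤ) * a :=
      Int.emod_add_mul_ediv _ _
    refine ⟨M.toNat, (e : ℤ) * (((n : ℤ) * a) / q) + (n : ℤ) * b, by omega, ?_⟩
    rw [Int.toNat_of_nonneg hM0]
    have h2 : M = (n : ℤ) * a - q * (((n : ℤ) * a) / q) := by rw [hM]; linarith
    rw [h2]
    linear_combination -((n : ℤ) * hab)
  -- every n > F is representable
  have hbig : ∀ n : ℕ, F < n → ∃ m k : ℕ, n = m * e + k * q := by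
    intro n hn
    obtain ⟨m, k, hm, hk⟩ := hbez n
    by_cases h0 : 0 ≤ k
    · exact hrep n m k (by positivity) h0 hk
    · exfalso
      have hk1 : k ≤ -1 := by omega
      have hm1 : (m : ℤ) ≤ (q : ℤ) - 1 := by
        have : (m : ℤ) < (q : ℤ) := by exact_mod_cast hm
        omega
      have he0 : (0 : ℤ) < (e : ℤ) := by exact_mod_cast (by omega : 0 < e)
      have hq0' : (0 : ℤ) < (q : ℤ) := by exact_mod_cast hq0
      have hFn : (F : ℤ) < (n : ℤ) := by exact_mod_cast hn
      rw [hFZ, hPZ] at hFn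
      nlinarith [hk]
  -- symmetry: for n ≤ F, n gap → F - n representable
  have hsym1 : ∀ n : ℕ, n ≤ F → n ∈ S → ∃ m k : ℕ, F - n = m * e + k * q := by
    intro n hn hnS
    obtain ⟨m, k, hm, hk⟩ := hbez n
    have h0 : ¬ (0 ≤ k) := fun h0 => hnS (hrep n m k (by positivity) h0 hk)
    have hFn : ((F - n : ℕ) : ℤ) = (F : ℤ) - n := by
      rw [Nat.cast_sub hn]
    refine hrep (F - n) ((q : ℤ) - 1 - m) (-1 - k) ?_ (by omega) ?_
    · have : (m : ℤ) < q := by exact_mod_cast hm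
      omega
    · rw [hFn, hFZ, hPZ]
      linear_combination -hk
  -- symmetry: for n ≤ F, n representable → F - n gap
  have hsym2 : ∀ n : ℕ, n ≤ F → n ∉ S → F - n ∈ S := by
    intro n hn hnS hFnS
    simp only [hS, Set.mem_setOf_eq, not_not] at hnS
    obtain ⟨m, k, h1⟩ := hnS
    obtain ⟨m', k', h2⟩ := hFnS
    exact hFrep ⟨m + m', k + k', by
      have hFnn : F = (F - n) + n := by omega
      rw [hFnn, h2, h1]; ring⟩
  -- gaps are at most F
  have hgap_le : ∀ n : ℕ, n ∈ S → n ≤ F := by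
    intro n hnS
    by_contra hc
    exact hnS (hbig n (by omega))
  -- finset of gaps
  set G : Finset ℕ := (Finset.range (F + 1)).filter (· ∈ S) with hG
  set R : Finset ℕ := (Finset.range (F + 1)).filter (· ∉ S) with hR
  have hSG : S = ↑G := by
    ext n
    simp only [hG, Finset.coe_filter, Finset.mem_range, Set.mem_setOf_eq]
    exact ⟨fun h => ⟨by have := hgap_le n h; omega, h⟩, fun h => h.2⟩
  have hGR : G.card = R.card := by
    apply Finset.card_bij' (fun n _ => F - n) (fun n _ => F - n)
    · intro n hn
      simp only [hG, Finset.mem_filter, Finset.mem_range] at hn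
      simp only [hR, Finset.mem_filter, Finset.mem_range]
      refine ⟨by omega, ?_⟩
      simp only [hS, Set.mem_setOf_eq, not_not]
      exact hsym1 n (by omega) hn.2
    · intro n hn
      simp only [hR, Finset.mem_filter, Finset.mem_range] at hn
      simp only [hG, Finset.mem_filter, Finset.mem_range]
      exact ⟨by omega, hsym2 n (by omega) hn.2⟩
    · intro n hn
      simp only [hG, Finset.mem_filter, Finset.mem_range] at hn
      omega
    · intro n hn
      simp only [hR, Finset.mem_filter, Finset.mem_range] at hn
      omega
  have hsum : G.card + R.card = F + 1 := by
    rw [hG, hR]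
    rw [Finset.card_filter_add_card_filter_not]
    exact Finset.card_range (F + 1)
  have hcard2 : 2 * G.card = F + 1 := by omega
  -- F + 1 = (e-1)*(q-1)
  obtain ⟨x, hx⟩ : ∃ x, e = x + 1 := ⟨e - 1, by omega⟩
  obtain ⟨y, hy⟩ : ∃ y, q = y + 1 := ⟨q - 1, by omega⟩
  have hxy : P = x * y + x + y + 1 := by rw [← hP, hx, hy]; ring
  have hF1 : F + 1 = (e - 1) * (q - 1) := by
    have h1 : (e - 1) * (q - 1) = x * y := by rw [hx, hy]; simp
    rw [h1]; omega
  constructor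
  · rw [hSG]; exact G.finite_toSet
  · rw [hSG, Set.ncard_coe_finset]
    omega
end

section
/- Let e and q be coprime integers with 2 ≤ e < q. Then the sum of all Weierstrass gaps for (e,q) equals e·q·(e−1)·(q−1)/4 − (e²−1)·(q²−1)/12; equivalently, 12 times the sum of all gaps equals (e−1)·(q−1)·(2·e·q − e − q − 1). -/
/-!
Every `n` is congruent mod `e` to `k * q` for a unique `k < e`, and `n` is a gap exactly when
`n < k * q`. Hence the gaps are the numbers `k * q - j * e` with `k < e` and
`1 ≤ j ≤ k * q / e`. Summing over `j`, residue class `k` contributes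
`((k q)² - e k q - r² + e r) / (2 e)` with `r = k q % e`; as `k` runs over `range e` so does `r`,
and the total reduces to the power sums `∑ k` and `∑ k²`.
-/

open Finset

theorem Nat.bijOn_mul_mod {e q : ℕ} (hcop : e.Coprime q) :
    Set.BijOn (fun k => k * q % e) (range e : Set ℕ) (range e) := by
  have maps : Set.MapsTo (fun k => k * q % e) (range e : Set ℕ) (range e) := fun k hk =>
    mem_range.2 (Nat.mod_lt _ (Nat.pos_of_ne_zero fun h => by simp [h] at hk))
  have inj : Set.InjOn (fun k => k * q % e) (range e : Set ℕ) := fun a ha b hb hab => by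
    have : a ≡ b [MOD e] := Nat.ModEq.cancel_right_of_coprime hcop hab
    rwa [Nat.ModEq, Nat.mod_eq_of_lt (mem_range.1 ha), Nat.mod_eq_of_lt (mem_range.1 hb)] at this
  exact ⟨maps, inj, surjOn_of_injOn_of_card_le _ maps inj le_rfl⟩

theorem Nat.sum_range_comp_mul_mod {M : Type*} [AddCommMonoid M] {e q : ℕ} (hcop : e.Coprime q)
    (g : ℕ → M) : ∑ k ∈ range e, g (k * q % e) = ∑ k ∈ range e, g k :=
  let h := Nat.bijOn_mul_mod hcop
  sum_nbij _ h.mapsTo h.injOn h.surjOn fun _ _ => rfl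

section Sums

variable {R : Type*} [CommRing R]

theorem two_mul_sum_range_id (n : ℕ) : 2 * ∑ i ∈ range n, (i : R) = n * (n - 1) := by
  induction n with
  | zero => simp
  | succ n ih => rw [sum_range_succ]; push_cast; linear_combination ih

theorem six_mul_sum_range_sq (n : ℕ) :
    6 * ∑ i ∈ range n, (i : R) ^ 2 = n * (n - 1) * (2 * n - 1) := by
  induction n with
  | zero => simp
  | succ n ih => rw [sum_range_succ]; push_cast; linear_combination ih

theorem two_mul_sum_range_sub_succ_mul (c e : R) (n : ℕ) :
    2 * ∑ j ∈ range n, (c - (j + 1) * e) = n * (2 * c - (n + 1) * e) := by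
  induction n with
  | zero => simp
  | succ n ih => rw [sum_range_succ]; push_cast; linear_combination ih

end Sums

theorem two_mul_mul_sum_range_div (a e : ℕ) :
    2 * e * ∑ j ∈ range (a / e), ((a : ℤ) - (j + 1) * e) =
      (a : ℤ) ^ 2 - e * a - ((a % e : ℕ) : ℤ) ^ 2 + e * (a % e : ℕ) := by
  have hsum := two_mul_sum_range_sub_succ_mul (a : ℤ) e (a / e)
  have hdiv : (e * (a / e : ℕ) + (a % e : ℕ) : ℤ) = a := by exact_mod_cast Nat.div_add_mod a e
  linear_combination e * hsum + (a + (a % e : ℕ) - e - e * (a / e : ℕ) : ℤ) * hdiv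

def weierstrassGaps (e q : ℕ) : Set ℕ := {n | ¬ ∃ m k : ℕ, n = m * e + k * q}

section Gaps

variable {e q : ℕ}

theorem mem_weierstrassGaps_iff (he : 0 < e) (hcop : e.Coprime q) {n : ℕ} :
    n ∈ weierstrassGaps e q ↔ ∃ k < e, ∃ j, 0 < j ∧ n + j * e = k * q := by
  have hbij := Nat.bijOn_mul_mod hcop
  constructor
  · intro hn
    obtain ⟨k, hk, hkn⟩ := hbij.surjOn (mem_range.2 (Nat.mod_lt n he))
    have hmod : k * q ≡ n [MOD e] := (hkn : k * q % e = n % e)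
    have hlt : n < k * q := by
      by_contra! hle
      obtain ⟨m, hm⟩ := (Nat.modEq_iff_dvd' hle).1 hmod
      exact hn ⟨m, k, by rw [mul_comm m, ← hm]; omega⟩
    obtain ⟨j, hj⟩ := (Nat.modEq_iff_dvd' hlt.le).1 hmod.symm
    exact ⟨k, mem_range.1 hk, j, Nat.pos_of_ne_zero (by rintro rfl; omega),
      by rw [mul_comm j, ← hj]; omega⟩
  · rintro ⟨k, hk, j, hj, hn⟩ ⟨m, k', rfl⟩
    have hlt : k' * q < k * q := by nlinarith
    have hk' : k' < k := lt_of_mul_lt_mul_right hlt (Nat.zero_le q)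
    have hmod : k' * q % e = k * q % e := by
      rw [← hn, show m * e + k' * q + j * e = k' * q + (m + j) * e by ring,
        Nat.add_mul_mod_self_right]
    have := hbij.injOn (mem_range.2 (hk'.trans hk)) (mem_range.2 hk) hmod
    omega

def weierstrassGapIndex (e q : ℕ) : Finset (Σ _ : ℕ, ℕ) :=
  (range e).sigma fun k => range (k * q / e)

theorem mem_weierstrassGapIndex (he : 0 < e) {p : Σ _ : ℕ, ℕ} :
    p ∈ weierstrassGapIndex e q ↔ p.1 < e ∧ (p.2 + 1) * e ≤ p.1 * q := by
  rw [weierstrassGapIndex, mem_sigma, mem_range, mem_range]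
  exact and_congr_right' (Nat.le_div_iff_mul_le he)

theorem weierstrassGaps_eq_image (he : 0 < e) (hcop : e.Coprime q) :
    weierstrassGaps e q = (weierstrassGapIndex e q).image fun p => p.1 * q - (p.2 + 1) * e := by
  ext n
  simp only [mem_weierstrassGaps_iff he hcop, coe_image, Set.mem_image, mem_coe,
    mem_weierstrassGapIndex he, Sigma.exists]
  constructor
  · rintro ⟨k, hk, j, hj, hn⟩
    refine ⟨k, j - 1, ⟨hk, ?_⟩, ?_⟩ <;> rw [Nat.sub_add_cancel hj] <;> omega
  · rintro ⟨k, j, ⟨hk, hj⟩, rfl⟩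
    exact ⟨k, hk, j + 1, j.succ_pos, Nat.sub_add_cancel hj⟩

theorem injOn_weierstrassGapIndex (he : 0 < e) (hcop : e.Coprime q) :
    Set.InjOn (fun p : Σ _ : ℕ, ℕ => p.1 * q - (p.2 + 1) * e) (weierstrassGapIndex e q) := by
  rintro ⟨k, j⟩ hp ⟨k', j'⟩ hp' h
  rw [mem_coe, mem_weierstrassGapIndex he] at hp hp'
  dsimp only at hp hp' h
  have hmod : k * q % e = k' * q % e := by
    rw [← Nat.sub_add_cancel hp.2, ← Nat.sub_add_cancel hp'.2, h, Nat.add_mul_mod_self_right,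
      Nat.add_mul_mod_self_right]
  obtain rfl := (Nat.bijOn_mul_mod hcop).injOn (mem_range.2 hp.1) (mem_range.2 hp'.1) hmod
  have : (j + 1) * e = (j' + 1) * e := by omega
  rw [Nat.eq_of_mul_eq_mul_right he this |> Nat.succ_injective]

theorem finsum_mem_weierstrassGaps (he : 0 < e) (hcop : e.Coprime q) :
    ∑ᶠ n ∈ weierstrassGaps e q, n =
      ∑ k ∈ range e, ∑ j ∈ range (k * q / e), (k * q - (j + 1) * e) := by
  rw [weierstrassGaps_eq_image he hcop, finsum_mem_coe_finset,
    sum_image (injOn_weierstrassGapIndex he hcop), weierstrassGapIndex, sum_sigma]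

theorem twelve_mul_finsum_mem_weierstrassGaps (he : 0 < e) (hcop : e.Coprime q) :
    12 * ((∑ᶠ n ∈ weierstrassGaps e q, n : ℕ) : ℤ) =
      (e - 1) * (q - 1) * (2 * e * q - e - q - 1) := by
  set S := ∑ᶠ n ∈ weierstrassGaps e q, n with hS
  have hcast : (S : ℤ) =
      ∑ k ∈ range e, ∑ j ∈ range (k * q / e), (((k * q : ℕ) : ℤ) - (j + 1) * e) := by
    rw [hS, finsum_mem_weierstrassGaps he hcop, Nat.cast_sum]
    refine sum_congr rfl fun k _ => ?_
    rw [Nat.cast_sum]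
    refine sum_congr rfl fun j hj => ?_
    rw [Nat.cast_sub ((Nat.le_div_iff_mul_le he).1 (mem_range.1 hj))]
    push_cast
    ring
  have hsplit : 2 * e * (S : ℤ) =
      ∑ k ∈ range e, (((k * q : ℕ) : ℤ) ^ 2 - e * (k * q : ℕ)) +
      ∑ k ∈ range e, (e * ((k * q % e : ℕ) : ℤ) - ((k * q % e : ℕ) : ℤ) ^ 2) := by
    rw [hcast, mul_sum, ← sum_add_distrib]
    refine sum_congr rfl fun k _ => ?_
    rw [two_mul_mul_sum_range_div]
    ring
  rw [Nat.sum_range_comp_mul_mod hcop fun r => e * (r : ℤ) - (r : ℤ) ^ 2] at hsplit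
  have hpoly : 2 * e * (S : ℤ) = (q ^ 2 - 1) * ∑ k ∈ range e, (k : ℤ) ^ 2 -
      e * (q - 1) * ∑ k ∈ range e, (k : ℤ) := by
    rw [hsplit, ← sum_add_distrib, mul_sum, mul_sum, ← sum_sub_distrib]
    refine sum_congr rfl fun k _ => ?_
    push_cast
    ring
  have hsq := six_mul_sum_range_sq (R := ℤ) e
  have hid := two_mul_sum_range_id (R := ℤ) e
  refine mul_right_cancel₀ (Nat.cast_ne_zero.2 he.ne' : (e : ℤ) ≠ 0) ?_
  linear_combination 6 * hpoly + (q ^ 2 - 1 : ℤ) * hsq - 3 * e * (q - 1 : ℤ) * hid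

end Gaps

/-- The sum of all Weierstrass gaps for `(e, q)` equals
`e*q*(e-1)*(q-1)/4 - (e²-1)*(q²-1)/12`; equivalently, twelve times the sum equals
`(e-1)*(q-1)*(2*e*q - e - q - 1)`. -/
theorem stmt8 (e q : ℕ) (he : 2 ≤ e) (hq : e < q) (hcop : Nat.Coprime e q)
    (S : ℕ) (hS : S = ∑ᶠ n ∈ {n : ℕ | ¬ ∃ m k : ℕ, n = m * e + k * q}, n) :
    S = e * q * (e - 1) * (q - 1) / 4 - (e ^ 2 - 1) * (q ^ 2 - 1) / 12 ∧
    12 * S = (e - 1) * (q - 1) * (2 * e * q - e - q - 1) := by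
  have hmain : 12 * (S : ℤ) = (e - 1) * (q - 1) * (2 * e * q - e - q - 1) :=
    hS ▸ twelve_mul_finsum_mem_weierstrassGaps (by omega) hcop
  have he1 : 1 ≤ e := by omega
  have hq1 : 1 ≤ q := by omega
  have hle : e + q + 1 ≤ 2 * e * q := by nlinarith
  have h4 : 4 ∣ e * q * (e - 1) * (q - 1) := by
    obtain ⟨a, ha⟩ := Nat.even_mul_pred_self e
    obtain ⟨b, hb⟩ := Nat.even_mul_pred_self q
    exact ⟨a * b, by grind⟩
  have h3 : 3 * (e * q * (e - 1) * (q - 1)) = 12 * S + (e ^ 2 - 1) * (q ^ 2 - 1) := by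
    zify [he1, hq1, Nat.one_le_pow 2 e he1, Nat.one_le_pow 2 q hq1]
    linear_combination -hmain
  refine ⟨?_, ?_⟩
  · -- `12 ∣ (e ^ 2 - 1) * (q ^ 2 - 1)` follows from `h3` and `h4`, so both divisions are exact.
    generalize e * q * (e - 1) * (q - 1) = P at h3 h4
    generalize (e ^ 2 - 1) * (q ^ 2 - 1) = Q at h3
    omega
  · zify [he1, hq1]
    rw [Nat.sub_sub, Nat.sub_sub, ← add_assoc, Nat.cast_sub hle]
    push_cast
    linear_combination hmain
end

section
/- Let e and q be coprime integers with 2 ≤ e < q, and let W(T) ∈ ℤ⟦T⟧ be the formal power series whose n-th coefficient is 1 if n is a Weierstrass gap for (e,q) and 0 otherwise. Then in ℤ⟦T⟧ one has the identity (1 − T)·(1 − T^e)·(1 − T^q)·W(T) = (1 − T^e)·(1 − T^q) − (1 − T)·(1 − T^{e·q}); equivalently, W(T) = 1/(1−T) − (1 − T^{e·q})/((1 − T^e)(1 − T^q)). -/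
/-!
Let `S ⊆ ℕ` be the semigroup generated by `e` and `q`, so that `W = 1/(1 - T) - ∑_{n ∈ S} Tⁿ`.
Because `gcd(e, q) = 1`, the Apéry set `{n ∈ S | n - q ∉ S}` consists exactly of the `q`
distinct multiples `e * i`, `0 ≤ i < q`: every element of `S` is `e * i + k * q` with `i < q`,
and `e * i - q ∉ S` since `e * i ≡ e * m (mod q)` forces `i ≡ m`. Hence
`(1 - T^q) ∑_{n ∈ S} Tⁿ = ∑_{i < q} T^{e i} = (1 - T^{e q}) / (1 - Tᵉ)`.
-/

namespace PowerSeries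

variable {R : Type*}

theorem sum_X_pow_eq_mk_indicator [Semiring R] (t : Finset ℕ) :
    ∑ j ∈ t, (X : R⟦X⟧) ^ j = mk ((t : Set ℕ).indicator 1) := by
  ext n
  simp [coeff_X_pow, Set.indicator_apply]

theorem one_sub_X_pow_mul_mk_indicator [Ring R] {s : Set ℕ} {q : ℕ}
    (hs : ∀ n ∈ s, n + q ∈ s) :
    (1 - X ^ q) * mk (s.indicator 1) = mk ((s \ (· + q) '' s).indicator (1 : ℕ → R)) := by
  ext n
  have h_image : n ∈ (· + q) '' s ↔ q ≤ n ∧ n - q ∈ s := by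
    constructor
    · rintro ⟨m, hm, rfl⟩
      simpa using hm
    · rintro ⟨hqn, hm⟩
      exact ⟨n - q, hm, Nat.sub_add_cancel hqn⟩
  rw [sub_mul, one_mul, map_sub, coeff_X_pow_mul', coeff_mk, coeff_mk, coeff_mk]
  by_cases hn : n ∈ (· + q) '' s
  · obtain ⟨hqn, hm⟩ := h_image.1 hn
    have : n ∈ s := Nat.sub_add_cancel hqn ▸ hs _ hm
    simp [hqn, hm, hn, this]
  · have h_shift : (if q ≤ n then s.indicator (1 : ℕ → R) (n - q) else 0) = 0 := by
      split_ifs with hqn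
      · exact Set.indicator_of_notMem (fun hm => hn (h_image.2 ⟨hqn, hm⟩)) _
      · rfl
    classical
    rw [h_shift, sub_zero, Set.indicator_apply, Set.indicator_apply]
    exact if_congr ⟨fun h => ⟨h, hn⟩, And.left⟩ rfl rfl

end PowerSeries

namespace Nat

variable {e q n : ℕ}

theorem mem_closure_pair_iff :
    n ∈ AddSubmonoid.closure ({e, q} : Set ℕ) ↔ ∃ m k, n = m * e + k * q := by
  simp [AddSubmonoid.mem_closure_pair, eq_comm]

theorem exists_lt_of_mem_closure_pair (hq : 0 < q)
    (hn : n ∈ AddSubmonoid.closure ({e, q} : Set ℕ)) : ∃ i < q, ∃ k, n = e * i + k * q := by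
  obtain ⟨m, k, rfl⟩ := mem_closure_pair_iff.1 hn
  refine ⟨m % q, mod_lt m hq, k + e * (m / q), ?_⟩
  conv_lhs => rw [← mod_add_div m q]
  ring

theorem injOn_mul_range_of_coprime (hcop : Coprime e q) :
    Set.InjOn (e * ·) (Finset.range q) := by
  intro i hi j hj hij
  have : i ≡ j [MOD q] := ModEq.cancel_left_of_coprime hcop.symm (congrArg (· % q) hij)
  exact ModEq.eq_of_lt_of_lt this (by simpa using hi) (by simpa using hj)

theorem mul_ne_add_of_mem_closure_pair (hcop : Coprime e q) {i x : ℕ} (hi : i < q)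
    (hx : x ∈ AddSubmonoid.closure ({e, q} : Set ℕ)) : e * i ≠ x + q := by
  obtain ⟨m, k, rfl⟩ := mem_closure_pair_iff.1 hx
  intro h
  have him : i = m % q := by
    have hmod : e * i ≡ e * m [MOD q] := by
      simp [ModEq, h, Nat.add_mod, mul_comm]
    rw [← mod_eq_of_lt hi]
    exact ModEq.cancel_left_of_coprime hcop.symm hmod
  have hm := mod_add_div m q
  rw [← him] at hm
  rw [← hm] at h
  nlinarith [Nat.zero_le (q * (m / q) * e), Nat.zero_le (k * q)]

theorem closure_pair_sdiff_image_add_eq (hcop : Coprime e q) :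
    (AddSubmonoid.closure ({e, q} : Set ℕ) : Set ℕ) \
        (· + q) '' AddSubmonoid.closure ({e, q} : Set ℕ) =
      (Finset.range q).image (e * ·) := by
  ext n
  simp only [Set.mem_sdiff, Finset.coe_image, Finset.coe_range, Set.mem_image, Set.mem_Iio]
  constructor
  · rintro ⟨hn, hn_shift⟩
    have hq : 0 < q := by
      refine Nat.pos_of_ne_zero fun hq => hn_shift ⟨n, hn, by simp [hq]⟩
    obtain ⟨i, hi, k, rfl⟩ := exists_lt_of_mem_closure_pair hq hn
    cases k with
    | zero => exact ⟨i, hi, by simp⟩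
    | succ k =>
      exact absurd ⟨e * i + k * q, mem_closure_pair_iff.2 ⟨i, k, by ring⟩, by ring⟩ hn_shift
  · rintro ⟨i, hi, rfl⟩
    refine ⟨mem_closure_pair_iff.2 ⟨i, 0, by ring⟩, ?_⟩
    rintro ⟨x, hx, hxi⟩
    exact mul_ne_add_of_mem_closure_pair hcop hi hx hxi.symm

end Nat

open PowerSeries Classical in
theorem stmt9_general (e q : ℕ) (hcop : Nat.Coprime e q)
    (W : PowerSeries ℤ)
    (hW : ∀ n : ℕ, PowerSeries.coeff n W =
      if ∃ m k : ℕ, n = m * e + k * q then 0 else 1) :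
    (1 - PowerSeries.X) * (1 - PowerSeries.X ^ e) * (1 - PowerSeries.X ^ q) * W
      = (1 - PowerSeries.X ^ e) * (1 - PowerSeries.X ^ q)
        - (1 - PowerSeries.X) * (1 - PowerSeries.X ^ (e * q)) := by
  set S := AddSubmonoid.closure ({e, q} : Set ℕ)
  have hW_eq : W = mk 1 - mk ((S : Set ℕ).indicator 1) := by
    ext n
    rw [hW, map_sub, coeff_mk, coeff_mk, Set.indicator_apply]
    simp only [S, SetLike.mem_coe, Nat.mem_closure_pair_iff, Pi.one_apply]
    split_ifs <;> simp
  have h_apery : (1 - X ^ q) * mk ((S : Set ℕ).indicator 1) =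
      ∑ i ∈ Finset.range q, (X : ℤ⟦X⟧) ^ (e * i) := by
    have h_add_q : ∀ n ∈ (S : Set ℕ), n + q ∈ S := fun n hn =>
      add_mem hn (AddSubmonoid.subset_closure (by simp))
    rw [one_sub_X_pow_mul_mk_indicator h_add_q,
      Nat.closure_pair_sdiff_image_add_eq hcop, ← sum_X_pow_eq_mk_indicator,
      Finset.sum_image (Nat.injOn_mul_range_of_coprime hcop)]
  have h_geom : (1 - X ^ e) * ∑ i ∈ Finset.range q, (X : ℤ⟦X⟧) ^ (e * i) = 1 - X ^ (e * q) := by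
    simp_rw [pow_mul]
    exact mul_neg_geom_sum _ _
  rw [hW_eq]
  linear_combination (1 - X ^ e) * (1 - X ^ q) * mk_one_mul_one_sub_eq_one ℤ
    - (1 - X) * ((1 - X ^ e) * h_apery + h_geom)

open PowerSeries Classical in
/-- The generating function `W(T)` of the Weierstrass gaps for `(e, q)` satisfies
`(1 - T)(1 - Tᵉ)(1 - T^q) W(T) = (1 - Tᵉ)(1 - T^q) - (1 - T)(1 - T^{eq})`,
i.e. `W(T) = 1/(1-T) - (1 - T^{eq})/((1 - Tᵉ)(1 - T^q))`. -/
theorem stmt9 (e q : ℕ) (he : 2 ≤ e) (hq : e < q) (hcop : Nat.Coprime e q)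
    (W : PowerSeries ℤ)
    (hW : ∀ n : ℕ, PowerSeries.coeff n W =
      if ∃ m k : ℕ, n = m * e + k * q then 0 else 1) :
    (1 - PowerSeries.X) * (1 - PowerSeries.X ^ e) * (1 - PowerSeries.X ^ q) * W
      = (1 - PowerSeries.X ^ e) * (1 - PowerSeries.X ^ q)
        - (1 - PowerSeries.X) * (1 - PowerSeries.X ^ (e * q)) :=
  stmt9_general e q hcop W hW
end

section
/- Let e and q be coprime integers with 2 ≤ e < q, let g = (e−1)·(q−1)/2, and let S be the sum of all Weierstrass gaps for (e,q). Then S − g·(g−1)/2 = (e²−1)·(q²−1)/24; equivalently, 24·S − 12·g·(g−1) = (e²−1)·(q²−1). -/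
private lemma inner_eval (c q : ℤ) (t : ℕ) :
    2 * ∑ b ∈ Finset.Ico 1 (t+1), (c - q * b) = 2 * t * c - q * t * (t+1) := by
  induction t with
  | zero => simp
  | succ n ih =>
    rw [Finset.sum_Ico_succ_top (by omega)]
    push_cast
    push_cast at ih
    linear_combination ih

private lemma inner_set (e q a : ℕ) (he : 2 ≤ e) (hq : e < q) (hcop : Nat.Coprime e q)
    (ha : a ∈ Finset.Ico 1 q) :
    (Finset.Ico 1 e).filter (fun b => q * b < e * a) = Finset.Ico 1 (e * a / q + 1) := by
  simp only [Finset.mem_Ico] at ha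
  have hq0 : 0 < q := by omega
  have hnd : ¬ q ∣ e * a := by
    intro hdvd
    have : q ∣ a := (Nat.coprime_comm.mp hcop).dvd_of_dvd_mul_left hdvd
    have := Nat.le_of_dvd (by omega) this
    omega
  have htlt : e * a / q < e := by
    rw [Nat.div_lt_iff_lt_mul hq0]
    have : e * a < e * q := by
      have := Nat.mul_lt_mul_of_le_of_lt (le_refl e) ha.2 (by omega : 0 < e)
      omega
    omega
  ext b
  simp only [Finset.mem_filter, Finset.mem_Ico]
  constructor
  · rintro ⟨⟨hb1, hb2⟩, hlt⟩
    refine ⟨hb1, ?_⟩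
    have hc : q * b = b * q := Nat.mul_comm q b
    have : b ≤ e * a / q := by
      rw [Nat.le_div_iff_mul_le hq0]
      omega
    omega
  · rintro ⟨hb1, hb2⟩
    have hble : b ≤ e * a / q := by omega
    have : b * q ≤ e * a := (Nat.le_div_iff_mul_le hq0).mp hble
    have hc : q * b = b * q := Nat.mul_comm q b
    have hne : q * b ≠ e * a := by
      intro hh
      exact hnd ⟨b, hh.symm⟩
    refine ⟨⟨hb1, by omega⟩, by omega⟩

private lemma sum_id_Ico (q : ℕ) : 2 * ∑ a ∈ Finset.Ico 1 q, (a : ℤ) = q * (q - 1) := by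
  induction q with
  | zero => simp
  | succ n ih =>
    rcases Nat.eq_zero_or_pos n with rfl | hn
    · simp
    · rw [Finset.sum_Ico_succ_top hn]
      push_cast
      push_cast at ih
      linear_combination ih

private lemma sum_sq_Ico (q : ℕ) : 6 * ∑ a ∈ Finset.Ico 1 q, (a : ℤ)^2 = q * (q - 1) * (2*q - 1) := by
  induction q with
  | zero => simp
  | succ n ih =>
    rcases Nat.eq_zero_or_pos n with rfl | hn
    · simp
    · rw [Finset.sum_Ico_succ_top hn]
      push_cast
      push_cast at ih
      linear_combination ih

private lemma sum_mod_perm (e q : ℕ) (hq : 0 < q) (hcop : Nat.Coprime e q) (f : ℕ → ℤ) :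
    ∑ a ∈ Finset.Ico 1 q, f (e * a % q) = ∑ a ∈ Finset.Ico 1 q, f a := by
  have hinj : ∀ x ∈ Finset.Ico 1 q, ∀ y ∈ Finset.Ico 1 q, e * x % q = e * y % q → x = y := by
    intro x hx y hy h
    simp only [Finset.mem_Ico] at hx hy
    have h2 : x ≡ y [MOD q] :=
      Nat.ModEq.cancel_left_of_coprime (by rwa [Nat.coprime_comm] at hcop) h
    have := h2.eq_of_lt_of_lt (by omega) (by omega)
    omega
  have hmaps : ∀ a ∈ Finset.Ico 1 q, e * a % q ∈ Finset.Ico 1 q := by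
    intro a ha
    simp only [Finset.mem_Ico] at ha ⊢
    refine ⟨?_, Nat.mod_lt _ hq⟩
    rcases Nat.eq_zero_or_pos (e * a % q) with h0 | h1
    · exfalso
      have hdvd : q ∣ e * a := Nat.dvd_of_mod_eq_zero h0
      have : q ∣ a := (Nat.coprime_comm.mp hcop).dvd_of_dvd_mul_left hdvd
      have := Nat.le_of_dvd (by omega) this
      omega
    · omega
  have himg : (Finset.Ico 1 q).image (fun a => e * a % q) = Finset.Ico 1 q := by
    apply Finset.eq_of_subset_of_card_le
    · intro b hb
      obtain ⟨a, ha, rfl⟩ := Finset.mem_image.mp hb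
      exact hmaps a ha
    · rw [Finset.card_image_of_injOn (fun x hx y hy => hinj x hx y hy)]
  conv_rhs => rw [← himg, Finset.sum_image hinj]

private lemma twelve_sum (e q : ℕ) (he : 2 ≤ e) (hq : e < q) (hcop : Nat.Coprime e q) :
    12 * ∑ p ∈ ((Finset.Ico 1 q) ×ˢ (Finset.Ico 1 e)).filter (fun p => q * p.2 < e * p.1),
        ((e * p.1 : ℤ) - q * p.2)
      = ((e:ℤ) - 1) * ((q:ℤ) - 1) * (2*e*q - e - q - 1) := by
  have hq0 : 0 < q := by omega
  have hqZ : (q:ℤ) ≠ 0 := Int.natCast_ne_zero.mpr (by omega)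
  have hstep1 : ∑ p ∈ ((Finset.Ico 1 q) ×ˢ (Finset.Ico 1 e)).filter (fun p => q * p.2 < e * p.1),
        ((e * p.1 : ℤ) - q * p.2)
      = ∑ a ∈ Finset.Ico 1 q, ∑ b ∈ Finset.Ico 1 (e*a/q + 1), ((e:ℤ) * a - q * b) := by
    rw [Finset.sum_filter, Finset.sum_product]
    apply Finset.sum_congr rfl
    intro a ha
    rw [← Finset.sum_filter, inner_set e q a he hq hcop ha]
  rw [hstep1]
  apply mul_left_cancel₀ hqZ
  have key : ∀ a ∈ Finset.Ico 1 q,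
      (q:ℤ) * (2 * ∑ b ∈ Finset.Ico 1 (e*a/q + 1), ((e:ℤ) * a - q * b))
        = (e:ℤ)^2 * a^2 - ((e*a % q : ℕ):ℤ)^2 - (q:ℤ)*e*a + (q:ℤ)*((e*a % q : ℕ):ℤ) := by
    intro a _
    have hdm : (q:ℤ) * ((e*a/q : ℕ):ℤ) + ((e*a % q : ℕ):ℤ) = (e:ℤ)*a := by
      exact_mod_cast Nat.div_add_mod (e*a) q
    rw [inner_eval ((e:ℤ) * a) (q:ℤ) (e*a/q)]
    linear_combination (((e*a % q : ℕ):ℤ) - q - q*((e*a/q : ℕ):ℤ) + (e:ℤ)*a) * hdm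
  have hperm1 : ∑ a ∈ Finset.Ico 1 q, ((e*a % q : ℕ):ℤ) = ∑ a ∈ Finset.Ico 1 q, (a:ℤ) :=
    sum_mod_perm e q hq0 hcop (fun x => (x:ℤ))
  have hperm2 : ∑ a ∈ Finset.Ico 1 q, ((e*a % q : ℕ):ℤ)^2 = ∑ a ∈ Finset.Ico 1 q, (a:ℤ)^2 :=
    sum_mod_perm e q hq0 hcop (fun x => ((x:ℤ))^2)
  have hs1 : 2 * ∑ a ∈ Finset.Ico 1 q, (a:ℤ) = q * (q - 1) := sum_id_Ico q
  have hs2 : 6 * ∑ a ∈ Finset.Ico 1 q, (a:ℤ)^2 = q * (q - 1) * (2*q - 1) := sum_sq_Ico q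
  calc (q:ℤ) * (12 * ∑ a ∈ Finset.Ico 1 q, ∑ b ∈ Finset.Ico 1 (e*a/q + 1), ((e:ℤ) * a - q * b))
      = ∑ a ∈ Finset.Ico 1 q,
          6 * ((q:ℤ) * (2 * ∑ b ∈ Finset.Ico 1 (e*a/q + 1), ((e:ℤ) * a - q * b))) := by
        rw [← mul_assoc,
          Finset.mul_sum (Finset.Ico 1 q)
            (fun a => ∑ b ∈ Finset.Ico 1 (e*a/q + 1), ((e:ℤ) * a - q * b)) ((q:ℤ) * 12)]
        exact Finset.sum_congr rfl (fun a _ => by ring)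
    _ = ∑ a ∈ Finset.Ico 1 q,
          6 * ((e:ℤ)^2 * a^2 - ((e*a % q : ℕ):ℤ)^2 - (q:ℤ)*e*a + (q:ℤ)*((e*a % q : ℕ):ℤ)) :=
        Finset.sum_congr rfl (fun a ha => by rw [key a ha])
    _ = 6 * ∑ a ∈ Finset.Ico 1 q,
          ((e:ℤ)^2 * a^2 - ((e*a % q : ℕ):ℤ)^2 - (q:ℤ)*e*a + (q:ℤ)*((e*a % q : ℕ):ℤ)) :=
        (Finset.mul_sum _ _ 6).symm
    _ = 6 * ((e:ℤ)^2 * (∑ a ∈ Finset.Ico 1 q, (a:ℤ)^2)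
          - (∑ a ∈ Finset.Ico 1 q, ((e*a % q : ℕ):ℤ)^2)
          - (q:ℤ)*e*(∑ a ∈ Finset.Ico 1 q, (a:ℤ))
          + (q:ℤ)*(∑ a ∈ Finset.Ico 1 q, ((e*a % q : ℕ):ℤ))) := by
        rw [Finset.sum_add_distrib, Finset.sum_sub_distrib, Finset.sum_sub_distrib,
          ← Finset.mul_sum, ← Finset.mul_sum, ← Finset.mul_sum]
    _ = (q:ℤ) * (((e:ℤ) - 1) * ((q:ℤ) - 1) * (2*e*q - e - q - 1)) := by
        rw [hperm1, hperm2]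
        linear_combination ((e:ℤ)^2-1)*hs2 - 3*(q:ℤ)*((e:ℤ)-1)*hs1

private lemma gap_set_eq (e q : ℕ) (he : 2 ≤ e) (hq : e < q) (hcop : Nat.Coprime e q) :
    {n : ℕ | ¬ ∃ m k : ℕ, n = m * e + k * q} =
      ↑((((Finset.Ico 1 q) ×ˢ (Finset.Ico 1 e)).filter (fun p => q * p.2 < e * p.1)).image
        (fun p => e * p.1 - q * p.2)) := by
  have hq0 : 0 < q := by omega
  haveI : NeZero q := ⟨by omega⟩
  ext n
  simp only [Set.mem_setOf_eq, Finset.coe_image, Set.mem_image, Finset.mem_coe,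
    Finset.mem_filter, Finset.mem_product, Finset.mem_Ico]
  constructor
  · intro hn
    have hn0 : n ≠ 0 := by rintro rfl; exact hn ⟨0, 0, by simp⟩
    have hu : IsUnit (e : ZMod q) := (ZMod.isUnit_iff_coprime e q).mpr hcop
    obtain ⟨m, hmdef⟩ : ∃ m : ℕ, m = ((hu.unit⁻¹ : (ZMod q)ˣ) * (n : ZMod q) : ZMod q).val :=
      ⟨_, rfl⟩
    have hmlt : m < q := hmdef ▸ ZMod.val_lt _
    have hcast : ((e * m : ℕ) : ZMod q) = (n : ZMod q) := by
      push_cast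
      rw [hmdef, ZMod.natCast_val, ZMod.cast_id, ← mul_assoc, hu.mul_val_inv, one_mul]
    have hmod : e * m ≡ n [MOD q] := (ZMod.natCast_eq_natCast_iff _ _ _).mp hcast
    have hnm : n < e * m := by
      by_contra h
      push_neg at h
      obtain ⟨k, hk⟩ := (Nat.modEq_iff_dvd' h).mp hmod
      exact hn ⟨m, k, by rw [mul_comm m e, mul_comm k q, ← hk, Nat.add_sub_cancel' h]⟩
    have hm1 : 1 ≤ m := by
      have : m ≠ 0 := by intro h0; rw [h0, Nat.mul_zero] at hnm; omega
      omega
    obtain ⟨b, hb⟩ := (Nat.modEq_iff_dvd' hnm.le).mp hmod.symm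
    have hb1 : 1 ≤ b := by
      have : b ≠ 0 := by intro h0; rw [h0, Nat.mul_zero] at hb; omega
      omega
    have hbe : b < e := by
      have h1 : q * b < q * e := by
        have h2 : e * m < e * q := by
          have := Nat.mul_lt_mul_of_le_of_lt (le_refl e) hmlt (by omega : 0 < e)
          omega
        have h3 : q * e = e * q := Nat.mul_comm q e
        omega
      exact lt_of_mul_lt_mul_left h1 (Nat.zero_le q)
    exact ⟨(m, b), ⟨⟨⟨hm1, hmlt⟩, hb1, hbe⟩, show q * b < e * m by omega⟩,
      show e * m - q * b = n by omega⟩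
  · rintro ⟨⟨a, b⟩, ⟨⟨⟨ha1, ha2⟩, hb1, hb2⟩, hlt⟩, rfl⟩
    rintro ⟨m, k, hmk⟩
    dsimp only at hmk hlt
    have hma : e * m < e * a := by
      have hme : m * e = e * m := Nat.mul_comm m e
      have hqb : 0 < q * b := Nat.mul_pos hq0 (by omega)
      have hkq : k * q = q * k := Nat.mul_comm k q
      omega
    have ham : m < a := lt_of_mul_lt_mul_left hma (Nat.zero_le e)
    obtain ⟨d, rfl⟩ : ∃ d, a = m + d := ⟨a - m, by omega⟩
    have hed : e * d = q * (k + b) := by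
      have h1 : e * (m + d) = e * m + e * d := Nat.mul_add e m d
      have hme : m * e = e * m := Nat.mul_comm m e
      have hkq : k * q = q * k := Nat.mul_comm k q
      have h2 : q * (k + b) = q * k + q * b := Nat.mul_add q k b
      omega
    have hqd : q ∣ d := (Nat.coprime_comm.mp hcop).dvd_of_dvd_mul_left ⟨k + b, hed⟩
    have := Nat.le_of_dvd (by omega) hqd
    omega

private lemma gap_inj (e q : ℕ) (hq0 : 0 < q) (hcop : Nat.Coprime e q) :
    ∀ p ∈ ((Finset.Ico 1 q) ×ˢ (Finset.Ico 1 e)).filter (fun p => q * p.2 < e * p.1),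
    ∀ p' ∈ ((Finset.Ico 1 q) ×ˢ (Finset.Ico 1 e)).filter (fun p => q * p.2 < e * p.1),
      e * p.1 - q * p.2 = e * p'.1 - q * p'.2 → p = p' := by
  rintro ⟨a, b⟩ hp ⟨a', b'⟩ hp' h
  simp only [Finset.mem_filter, Finset.mem_product, Finset.mem_Ico] at hp hp'
  dsimp only at h
  obtain ⟨⟨⟨ha1, ha2⟩, hb1, hb2⟩, hlt⟩ := hp
  obtain ⟨⟨⟨ha1', ha2'⟩, hb1', hb2'⟩, hlt'⟩ := hp'
  have hsum : e * a + q * b' = e * a' + q * b := by omega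
  have h1 : (e * a + q * b') % q = (e * a) % q := Nat.add_mul_mod_self_left (e * a) q b'
  have h2 : (e * a' + q * b) % q = (e * a') % q := Nat.add_mul_mod_self_left (e * a') q b
  have hmod : e * a ≡ e * a' [MOD q] := by
    unfold Nat.ModEq
    rw [hsum] at h1
    omega
  have haa : a ≡ a' [MOD q] :=
    Nat.ModEq.cancel_left_of_coprime (by rwa [Nat.coprime_comm] at hcop) hmod
  have haa' : a = a' := haa.eq_of_lt_of_lt (by omega) (by omega)
  subst haa'
  have : b = b' := by
    have := Nat.eq_of_mul_eq_mul_left hq0 (show q * b = q * b' by omega)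
    omega
  rw [this]

/-- With `g = (e-1)(q-1)/2` and `S` the sum of all Weierstrass gaps for `(e, q)`,
one has `S - g(g-1)/2 = (e²-1)(q²-1)/24`; equivalently
`24 S - 12 g (g-1) = (e²-1)(q²-1)`. -/
theorem stmt10 (e q : ℕ) (he : 2 ≤ e) (hq : e < q) (hcop : Nat.Coprime e q)
    (g S : ℕ) (hg : g = (e - 1) * (q - 1) / 2)
    (hS : S = ∑ᶠ n ∈ {n : ℕ | ¬ ∃ m k : ℕ, n = m * e + k * q}, n) :
    S - g * (g - 1) / 2 = (e ^ 2 - 1) * (q ^ 2 - 1) / 24 ∧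
    24 * S - 12 * (g * (g - 1)) = (e ^ 2 - 1) * (q ^ 2 - 1) := by
  have hq0 : 0 < q := by omega
  have hsetS : S = ∑ p ∈ ((Finset.Ico 1 q) ×ˢ (Finset.Ico 1 e)).filter
      (fun p => q * p.2 < e * p.1), (e * p.1 - q * p.2) := by
    rw [hS, gap_set_eq e q he hq hcop, finsum_mem_coe_finset]
    exact Finset.sum_image (gap_inj e q hq0 hcop)
  have hcastS : (S : ℤ) = ∑ p ∈ ((Finset.Ico 1 q) ×ˢ (Finset.Ico 1 e)).filter
      (fun p => q * p.2 < e * p.1), ((e * p.1 : ℤ) - q * p.2) := by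
    rw [hsetS, Nat.cast_sum]
    apply Finset.sum_congr rfl
    intro p hp
    have hlt : q * p.2 < e * p.1 := (Finset.mem_filter.mp hp).2
    rw [Nat.cast_sub hlt.le]
    push_cast
    ring
  have h12 : 12 * (S : ℤ) = ((e:ℤ) - 1) * ((q:ℤ) - 1) * (2*e*q - e - q - 1) := by
    rw [hcastS]
    exact twelve_sum e q he hq hcop
  have h2dvd : 2 ∣ (e - 1) * (q - 1) := by
    have hne : ¬ (2 ∣ e ∧ 2 ∣ q) := by
      rintro ⟨h1, h2⟩
      have := Nat.dvd_gcd h1 h2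
      rw [hcop] at this
      omega
    have h2 : 2 ∣ (e - 1) ∨ 2 ∣ (q - 1) := by omega
    rcases h2 with h | h
    · exact h.mul_right _
    · exact h.mul_left _
  have h2g : 2 * g = (e - 1) * (q - 1) := by rw [hg, Nat.mul_div_cancel' h2dvd]
  have hg1 : 1 ≤ g := by
    have h2 : 2 ≤ (e - 1) * (q - 1) := by
      calc 2 = 1 * 2 := rfl
      _ ≤ (e - 1) * (q - 1) := Nat.mul_le_mul (by omega) (by omega)
    omega
  have h2gZ : 2 * (g : ℤ) = ((e:ℤ) - 1) * ((q:ℤ) - 1) := by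
    zify [show 1 ≤ e by omega, show 1 ≤ q by omega] at h2g
    linarith
  have hZ : (24 * S : ℤ) = 12 * ((g:ℤ) * ((g:ℤ) - 1)) + ((e:ℤ)^2 - 1) * ((q:ℤ)^2 - 1) := by
    linear_combination 2 * h12 - 3 * (2*(g:ℤ) + ((e:ℤ) - 1) * ((q:ℤ) - 1) - 2) * h2gZ
  have hN : 24 * S = 12 * (g * (g - 1)) + (e^2 - 1) * (q^2 - 1) := by
    zify [hg1, show 1 ≤ e^2 from Nat.one_le_pow _ _ (by omega),
      show 1 ≤ q^2 from Nat.one_le_pow _ _ (by omega)]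
    linarith [hZ]
  have hGeven : 2 ∣ g * (g - 1) := by
    have h := Nat.even_mul_succ_self (g - 1)
    rw [Nat.sub_add_cancel hg1] at h
    rw [mul_comm]
    exact h.two_dvd
  constructor
  · omega
  · omega
end

section
/- Let R be a commutative ring and let G ∈ R⟦t,s⟧ be a formal power series in two variables such that every monomial t^i s^j occurring in G satisfies j ≥ 1 and i + j ≥ 2 (i.e., G lies in the ideal generated by t·s and s²). Then there exists a unique formal power series φ ∈ R⟦t⟧ such that φ = t² + G(t, φ) (equivalently, F(t, φ(t)) = 0 where F(t,s) = s − t² − G(t,s)); moreover this φ satisfies φ ∈ t²·R⟦t⟧, with leading term t². -/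
/-- Substitution of `φ ∈ R⟦t⟧` for the (outer) variable `s` in
`G ∈ R⟦t⟧⟦s⟧`, i.e. `G(t, φ) = Σ_j (coeff_s j G) · φ^j`.  For `φ` with zero constant
term this sum is coefficientwise finite: the `n`-th `t`-coefficient only receives
contributions from `j ≤ n`. -/
noncomputable def substS {R : Type*} [CommRing R]
    (G : PowerSeries (PowerSeries R)) (φ : PowerSeries R) : PowerSeries R :=
  PowerSeries.mk fun n => ∑ j ∈ Finset.range (n + 1),
    PowerSeries.coeff n (PowerSeries.coeff j G * φ ^ j)

/-!
The map `ψ ↦ t² + G(t, ψ)` is a contraction for the `t`-adic filtration on `t·R⟦t⟧`: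
if `ψ₁ ≡ ψ₂ mod tⁿ` then `G(t, ψ₁) ≡ G(t, ψ₂) mod tⁿ⁺¹`, because `G` has no `s⁰` part,
its `s¹` part is divisible by `t`, and `ψ₁ʲ - ψ₂ʲ ≡ 0 mod tⁿ⁺ʲ⁻¹`. The fixed point is the
`t`-adic limit of the iterates starting at `0`, and it is unique since `⋂ tⁿ R⟦t⟧ = 0`.
Applying the contraction to `φ` and `0` twice shows `φ ≡ t² mod t³`.
-/

open PowerSeries Finset

theorem pow_add_dvd_pow_succ_sub_pow_succ {A : Type*} [CommRing A] {x a b : A}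
    (ha : x ∣ a) (hb : x ∣ b) {n : ℕ} (hab : x ^ n ∣ a - b) :
    ∀ j : ℕ, x ^ (n + j) ∣ a ^ (j + 1) - b ^ (j + 1)
  | 0 => by simpa using hab
  | j + 1 => by
    have hsplit : a ^ (j + 2) - b ^ (j + 2) =
        a * (a ^ (j + 1) - b ^ (j + 1)) + (a - b) * b ^ (j + 1) := by ring
    rw [hsplit]
    refine dvd_add ?_ ?_
    · rw [← add_assoc, pow_succ']
      exact mul_dvd_mul ha (pow_add_dvd_pow_succ_sub_pow_succ ha hb hab j)
    · rw [pow_add]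
      exact mul_dvd_mul hab (pow_dvd_pow_of_dvd hb _)

namespace PowerSeries

variable {R : Type*} [CommRing R]

theorem eq_of_forall_X_pow_dvd_sub {a b : R⟦X⟧} (h : ∀ n, X ^ n ∣ a - b) : a = b := by
  ext n
  rw [← sub_eq_zero, ← map_sub]
  exact X_pow_dvd_iff.mp (h (n + 1)) n n.lt_succ_self

def IsXAdicContraction (f : R⟦X⟧ → R⟦X⟧) : Prop :=
  ∀ a b, X ∣ a → X ∣ b → ∀ n, X ^ n ∣ a - b → X ^ (n + 1) ∣ f a - f b

namespace IsXAdicContraction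

variable {f : R⟦X⟧ → R⟦X⟧}

theorem const_add (hf : IsXAdicContraction f) (c : R⟦X⟧) :
    IsXAdicContraction fun a => c + f a := by
  intro a b ha hb n hab
  simpa only [add_sub_add_left_eq_sub] using hf a b ha hb n hab

theorem X_dvd_apply (hf : IsXAdicContraction f) (hf0 : X ∣ f 0) {a : R⟦X⟧} (ha : X ∣ a) :
    X ∣ f a := by
  have h := hf a 0 ha (dvd_zero X) 0 (by simp)
  rw [zero_add, pow_one] at h
  simpa using dvd_add h hf0

theorem eq_of_isFixedPt (hf : IsXAdicContraction f) {a b : R⟦X⟧} (ha : X ∣ a) (hb : X ∣ b)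
    (hfa : f a = a) (hfb : f b = b) : a = b := by
  refine eq_of_forall_X_pow_dvd_sub fun n => ?_
  induction n with
  | zero => simp
  | succ n ih => simpa only [hfa, hfb] using hf a b ha hb n ih

theorem X_dvd_iterate (hf : IsXAdicContraction f) (hf0 : X ∣ f 0) (k : ℕ) :
    X ∣ f^[k] 0 := by
  induction k with
  | zero => exact dvd_zero X
  | succ k ih => exact Function.iterate_succ_apply' f k 0 ▸ hf.X_dvd_apply hf0 ih

theorem X_pow_dvd_iterate_add_sub (hf : IsXAdicContraction f) (hf0 : X ∣ f 0) (k i : ℕ) :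
    X ^ k ∣ f^[k + i] 0 - f^[k] 0 := by
  induction k with
  | zero => simp
  | succ k ih =>
    rw [show k + 1 + i = k + i + 1 by omega, Function.iterate_succ_apply',
      Function.iterate_succ_apply']
    exact hf _ _ (hf.X_dvd_iterate hf0 _) (hf.X_dvd_iterate hf0 _) k ih

theorem exists_isFixedPt (hf : IsXAdicContraction f) (hf0 : X ∣ f 0) :
    ∃ a, X ∣ a ∧ f a = a := by
  set a : R⟦X⟧ := mk fun n => coeff n (f^[n + 1] 0)
  have hlim : ∀ n, X ^ n ∣ a - f^[n] 0 := by
    refine fun n => X_pow_dvd_iff.mpr fun m hm => ?_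
    obtain ⟨i, rfl⟩ : ∃ i, n = m + 1 + i := ⟨n - (m + 1), by omega⟩
    have h := X_pow_dvd_iff.mp (hf.X_pow_dvd_iterate_add_sub hf0 (m + 1) i) m m.lt_succ_self
    rw [map_sub, sub_eq_zero] at h
    rw [map_sub, coeff_mk, h, sub_self]
  have ha : X ∣ a := by
    have h := hlim 1
    rwa [pow_one, dvd_sub_left (hf.X_dvd_iterate hf0 1)] at h
  refine ⟨a, ha, eq_of_forall_X_pow_dvd_sub fun n => ?_⟩
  cases n with
  | zero => simp
  | succ n =>
    have hstep := hf a _ ha (hf.X_dvd_iterate hf0 n) n (hlim n)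
    rw [← Function.iterate_succ_apply' f n 0] at hstep
    simpa using dvd_sub hstep (hlim (n + 1))

theorem existsUnique_isFixedPt (hf : IsXAdicContraction f) (hf0 : X ∣ f 0) :
    ∃! a, X ∣ a ∧ f a = a :=
  let ⟨a, ha, hfa⟩ := hf.exists_isFixedPt hf0
  ⟨a, ⟨ha, hfa⟩, fun _ ⟨hb, hfb⟩ => hf.eq_of_isFixedPt hb ha hfb hfa⟩

end IsXAdicContraction

end PowerSeries

section substS

variable {R : Type*} [CommRing R] {G : R⟦X⟧⟦X⟧}

theorem substS_zero : substS G 0 = coeff 0 G := by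
  ext n
  rw [substS, coeff_mk, sum_range_succ', sum_eq_zero fun j _ => by simp]
  simp

theorem X_pow_succ_dvd_coeff_mul_pow_sub (hG0 : coeff 0 G = 0) (hG1 : X ∣ coeff 1 G)
    {a b : R⟦X⟧} (ha : X ∣ a) (hb : X ∣ b) {n : ℕ} (hab : X ^ n ∣ a - b) :
    ∀ j, X ^ (n + 1) ∣ coeff j G * (a ^ j - b ^ j)
  | 0 => by simp [hG0]
  | 1 => by
    simp only [pow_one]
    rw [pow_succ']
    exact mul_dvd_mul hG1 hab
  | k + 2 => dvd_mul_of_dvd_right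
      ((pow_dvd_pow X (by omega : n + 1 ≤ n + (k + 1))).trans
        (pow_add_dvd_pow_succ_sub_pow_succ ha hb hab (k + 1))) _

theorem isXAdicContraction_substS (hG0 : coeff 0 G = 0) (hG1 : X ∣ coeff 1 G) :
    IsXAdicContraction (substS G) := by
  refine fun a b ha hb n hab => X_pow_dvd_iff.mpr fun m hm => ?_
  rw [map_sub]
  simp only [substS, coeff_mk, ← sum_sub_distrib, ← map_sub, ← mul_sub]
  exact sum_eq_zero fun j _ =>
    X_pow_dvd_iff.mp (X_pow_succ_dvd_coeff_mul_pow_sub hG0 hG1 ha hb hab j) m hm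

theorem X_pow_three_dvd_sub_X_sq (hG0 : coeff 0 G = 0) (hG1 : X ∣ coeff 1 G) {φ : R⟦X⟧}
    (hφ : X ∣ φ) (h : φ = X ^ 2 + substS G φ) : X ^ 3 ∣ φ - X ^ 2 := by
  have hc := isXAdicContraction_substS hG0 hG1
  have hsub : φ - X ^ 2 = substS G φ - substS G 0 := by
    rw [substS_zero, hG0, sub_zero]
    nth_rewrite 1 [h]
    ring
  have hφ2 : X ^ 2 ∣ φ := by
    have h2 := hc φ 0 hφ (dvd_zero X) 1 (by simpa using hφ)
    rwa [← hsub, dvd_sub_left (dvd_refl _)] at h2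
  rw [hsub]
  exact hc φ 0 hφ (dvd_zero X) 2 (by simpa using hφ2)

end substS

/-- Let `G ∈ R⟦t, s⟧` (encoded as `R⟦t⟧⟦s⟧`) be such that every monomial `t^i s^j`
occurring in `G` has `j ≥ 1` and `i + j ≥ 2`.  Then there is a unique power series
`φ ∈ R⟦t⟧` (with zero constant term, as required for the substitution `G(t, φ)` to be
defined) such that `φ = t² + G(t, φ)`; moreover any such `φ` lies in `t²·R⟦t⟧` with
leading term `t²`. -/
theorem stmt14 (R : Type*) [CommRing R] (G : PowerSeries (PowerSeries R))
    (hG : ∀ i j : ℕ,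
      PowerSeries.coeff i (PowerSeries.coeff j G) ≠ 0 →
        1 ≤ j ∧ 2 ≤ i + j) :
    (∃! φ : PowerSeries R,
      PowerSeries.constantCoeff φ = 0 ∧ φ = PowerSeries.X ^ 2 + substS G φ) ∧
    (∀ φ : PowerSeries R,
      PowerSeries.constantCoeff φ = 0 → φ = PowerSeries.X ^ 2 + substS G φ →
        PowerSeries.coeff 0 φ = 0 ∧ PowerSeries.coeff 1 φ = 0 ∧
          PowerSeries.coeff 2 φ = 1) := by
  have hG0 : coeff 0 G = 0 := by
    ext i
    by_contra h
    exact absurd (hG i 0 h).1 (by norm_num)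
  have hG1 : X ∣ coeff 1 G := by
    rw [X_dvd_iff, ← coeff_zero_eq_constantCoeff_apply]
    by_contra h
    exact absurd (hG 0 1 h).2 (by norm_num)
  have hf := (isXAdicContraction_substS hG0 hG1).const_add (X ^ 2)
  have hf0 : X ∣ X ^ 2 + substS G 0 := by
    rw [substS_zero, hG0, add_zero]
    exact dvd_pow_self X two_ne_zero
  refine ⟨(existsUnique_congr fun φ => ?_).mp (hf.existsUnique_isFixedPt hf0),
    fun φ hφ h => ?_⟩
  · rw [X_dvd_iff, @eq_comm _ (X ^ 2 + substS G φ)]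
  have h3 := X_pow_dvd_iff.mp (X_pow_three_dvd_sub_X_sq hG0 hG1 (X_dvd_iff.mpr hφ) h)
  simp only [map_sub, sub_eq_zero, coeff_X_pow] at h3
  exact ⟨by simpa using h3 0, by simpa using h3 1, by simpa using h3 2⟩
end
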